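/- arXiv:1904.09281 — 8 statements merged into one kernel-verified Lean document; each statement's English description precedes it below -/
import Mathlib

section
/- Under the hypotheses that (1) for all z, z' ∈ Z the function t ↦ ρ_t(z,z') is monotone on [a,b], and (2) for all z, z' ∈ Z and t, s ∈ [a,b], ρ_t(z,z') ≤ ρ_s(z,z') + 2c|t−s|, the distance function d((z₁,t₁),(z₂,t₂)) = inf_{z∈Z}(ρ_{t₁}(z₁,z) + ρ_{t₂}(z,z₂)) + c|t₁−t₂| satisfies the triangle inequality on Z×[a,b]. -/
theorem stmt1 {Z : Type*} [Nonempty Z] (a b c : ℝ) (hab : a ≤ b) (hc : 0 < c)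
    (ρ : ℝ → Z → Z → ℝ)
    (hρ0 : ∀ t ∈ Set.Icc a b, ∀ z z' : Z, ρ t z z' = 0 ↔ z = z')
    (hρs : ∀ t ∈ Set.Icc a b, ∀ z z' : Z, ρ t z z' = ρ t z' z)
    (hρtri : ∀ t ∈ Set.Icc a b, ∀ z z' z'' : Z, ρ t z z'' ≤ ρ t z z' + ρ t z' z'')
    (d : Z × ℝ → Z × ℝ → ℝ)
    (hd : ∀ p q : Z × ℝ, d p q = (⨅ z : Z, ρ p.2 p.1 z + ρ q.2 z q.1) + c * |p.2 - q.2|)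
    (hmono : ∀ z z' : Z, MonotoneOn (fun t => ρ t z z') (Set.Icc a b) ∨
      AntitoneOn (fun t => ρ t z z') (Set.Icc a b))
    (hlip : ∀ z z' : Z, ∀ t ∈ Set.Icc a b, ∀ s ∈ Set.Icc a b,
      ρ t z z' ≤ ρ s z z' + 2 * c * |t - s|) :
    ∀ t₁ ∈ Set.Icc a b, ∀ t₂ ∈ Set.Icc a b, ∀ t₃ ∈ Set.Icc a b, ∀ z₁ z₂ z₃ : Z,
      d (z₁, t₁) (z₃, t₃) ≤ d (z₁, t₁) (z₂, t₂) + d (z₂, t₂) (z₃, t₃) := by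
  have hnn : ∀ t ∈ Set.Icc a b, ∀ z z' : Z, 0 ≤ ρ t z z' := by
    intro t ht z z'
    have h1 := hρtri t ht z z' z
    have h2 := (hρ0 t ht z z).mpr rfl
    have h3 := hρs t ht z z'
    linarith
  intro t₁ ht₁ t₂ ht₂ t₃ ht₃ z₁ z₂ z₃
  rw [hd, hd, hd]
  dsimp only
  have hbdd13 : BddBelow (Set.range fun z => ρ t₁ z₁ z + ρ t₃ z z₃) := by
    refine ⟨0, ?_⟩
    rintro x ⟨z, rfl⟩
    exact add_nonneg (hnn t₁ ht₁ z₁ z) (hnn t₃ ht₃ z z₃)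
  have key : ∀ u v : Z,
      (⨅ z, ρ t₁ z₁ z + ρ t₃ z z₃) ≤
        (ρ t₁ z₁ u + ρ t₂ u z₂) + (ρ t₂ z₂ v + ρ t₃ v z₃)
          + (c * |t₁ - t₂| + c * |t₂ - t₃| - c * |t₁ - t₃|) := by
    intro u v
    have htri2 := hρtri t₂ ht₂ u z₂ v
    have hmin : ρ t₁ u v ≤ ρ t₂ u v + (c * |t₁ - t₂| + c * |t₂ - t₃| - c * |t₁ - t₃|)
        ∨ ρ t₃ u v ≤ ρ t₂ u v + (c * |t₁ - t₂| + c * |t₂ - t₃| - c * |t₁ - t₃|) := by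
      rcases lt_or_ge t₂ (min t₁ t₃) with h1 | h1
      · rcases le_total t₁ t₃ with h | h
        · -- t₂ < t₁ ≤ t₃
          have ht2t1 : t₂ < t₁ := lt_of_lt_of_le h1 (min_le_left _ _)
          left
          have hl := hlip u v t₁ ht₁ t₂ ht₂
          have e1 : |t₁ - t₂| = t₁ - t₂ := abs_of_nonneg (by linarith)
          have e2 : |t₂ - t₃| = -(t₂ - t₃) := abs_of_nonpos (by linarith)
          have e3 : |t₁ - t₃| = -(t₁ - t₃) := abs_of_nonpos (by linarith)
          rw [e1] at hl
          rw [e1, e2, e3]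
          nlinarith [hl]
        · -- t₂ < t₃ ≤ t₁
          right
          have ht2t3 : t₂ < t₃ := lt_of_lt_of_le h1 (min_le_right _ _)
          have hl := hlip u v t₃ ht₃ t₂ ht₂
          have e1 : |t₁ - t₂| = t₁ - t₂ := abs_of_nonneg (by linarith)
          have e2 : |t₂ - t₃| = -(t₂ - t₃) := abs_of_nonpos (by linarith)
          have e3 : |t₁ - t₃| = t₁ - t₃ := abs_of_nonneg (by linarith)
          have e4 : |t₃ - t₂| = t₃ - t₂ := abs_of_nonneg (by linarith)
          rw [e4] at hl
          rw [e1, e2, e3]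
          nlinarith [hl]
      · rcases lt_or_ge (max t₁ t₃) t₂ with h2 | h2
        · rcases le_total t₁ t₃ with h | h
          · -- t₁ ≤ t₃ < t₂
            right
            have ht3t2 : t₃ < t₂ := lt_of_le_of_lt (le_max_right _ _) h2
            have hl := hlip u v t₃ ht₃ t₂ ht₂
            have e1 : |t₁ - t₂| = -(t₁ - t₂) := abs_of_nonpos (by linarith)
            have e2 : |t₂ - t₃| = t₂ - t₃ := abs_of_nonneg (by linarith)
            have e3 : |t₁ - t₃| = -(t₁ - t₃) := abs_of_nonpos (by linarith)
            have e4 : |t₃ - t₂| = -(t₃ - t₂) := abs_of_nonpos (by linarith)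
            rw [e4] at hl
            rw [e1, e2, e3]
            nlinarith [hl]
          · -- t₃ ≤ t₁ < t₂
            left
            have ht1t2 : t₁ < t₂ := lt_of_le_of_lt (le_max_left _ _) h2
            have hl := hlip u v t₁ ht₁ t₂ ht₂
            have e1 : |t₁ - t₂| = -(t₁ - t₂) := abs_of_nonpos (by linarith)
            have e2 : |t₂ - t₃| = t₂ - t₃ := abs_of_nonneg (by linarith)
            have e3 : |t₁ - t₃| = t₁ - t₃ := abs_of_nonneg (by linarith)
            rw [e1] at hl
            rw [e1, e2, e3]
            nlinarith [hl]
        · -- min t₁ t₃ ≤ t₂ ≤ max t₁ t₃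
          have hKnn : 0 ≤ c * |t₁ - t₂| + c * |t₂ - t₃| - c * |t₁ - t₃| := by
            have h := abs_sub_le t₁ t₂ t₃
            nlinarith [hc.le]
          rcases hmono u v with hm | hm <;> rcases le_total t₁ t₃ with h | h
          · left
            rw [min_eq_left h] at h1
            have := hm ht₁ ht₂ h1
            simp only at this
            linarith
          · right
            rw [min_eq_right h] at h1
            have := hm ht₃ ht₂ h1
            simp only at this
            linarith
          · right
            rw [max_eq_right h] at h2
            have := hm ht₂ ht₃ h2
            simp only at this
            linarith
          · left
            rw [max_eq_left h] at h2
            have := hm ht₂ ht₁ h2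
            simp only at this
            linarith
    rcases hmin with hmin | hmin
    · have hle := ciInf_le hbdd13 v
      have h1 := hρtri t₁ ht₁ z₁ u v
      linarith
    · have hle := ciInf_le hbdd13 u
      have h1 := hρtri t₃ ht₃ u v z₃
      linarith
  have hfin :
      (⨅ z, ρ t₁ z₁ z + ρ t₃ z z₃) + c * |t₁ - t₃| - c * |t₁ - t₂| - c * |t₂ - t₃| ≤
        (⨅ z, ρ t₁ z₁ z + ρ t₂ z z₂) + ⨅ z, ρ t₂ z₂ z + ρ t₃ z z₃ :=
    le_ciInf_add_ciInf fun u v => by have := key u v; linarith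
  linarith
end

section
/- Under the same hypotheses (monotonicity of t ↦ ρ_t(z,z') and the Lipschitz-type condition ρ_t(z,z') ≤ ρ_s(z,z') + 2c|t−s|), the distance function d on Z×[a,b] is a metric, and for any t, s ∈ [a,b], the Hausdorff distance between the sections Z_t = Z×{t} and Z_s = Z×{s} in (Z×[a,b], d) equals c|t−s|. -/
theorem stmt2 {Z : Type*} [Nonempty Z] (a b c : ℝ) (hab : a ≤ b) (hc : 0 < c)
    (ρ : ℝ → Z → Z → ℝ)
    (hρ0 : ∀ t ∈ Set.Icc a b, ∀ z z' : Z, ρ t z z' = 0 ↔ z = z')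
    (hρs : ∀ t ∈ Set.Icc a b, ∀ z z' : Z, ρ t z z' = ρ t z' z)
    (hρtri : ∀ t ∈ Set.Icc a b, ∀ z z' z'' : Z, ρ t z z'' ≤ ρ t z z' + ρ t z' z'')
    (d : Z × ℝ → Z × ℝ → ℝ)
    (hd : ∀ p q : Z × ℝ, d p q = (⨅ z : Z, ρ p.2 p.1 z + ρ q.2 z q.1) + c * |p.2 - q.2|)
    (hmono : ∀ z z' : Z, MonotoneOn (fun t => ρ t z z') (Set.Icc a b) ∨
      AntitoneOn (fun t => ρ t z z') (Set.Icc a b))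
    (hlip : ∀ z z' : Z, ∀ t ∈ Set.Icc a b, ∀ s ∈ Set.Icc a b,
      ρ t z z' ≤ ρ s z z' + 2 * c * |t - s|) :
    (∀ p q : Z × ℝ, p.2 ∈ Set.Icc a b → q.2 ∈ Set.Icc a b → (d p q = 0 ↔ p = q)) ∧
    (∀ p q : Z × ℝ, p.2 ∈ Set.Icc a b → q.2 ∈ Set.Icc a b → d p q = d q p) ∧
    (∀ p q r : Z × ℝ, p.2 ∈ Set.Icc a b → q.2 ∈ Set.Icc a b → r.2 ∈ Set.Icc a b →
      d p r ≤ d p q + d q r) ∧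
    (∀ t ∈ Set.Icc a b, ∀ s ∈ Set.Icc a b,
      max (⨆ z : Z, ⨅ z' : Z, d (z, t) (z', s)) (⨆ z' : Z, ⨅ z : Z, d (z, t) (z', s)) =
        c * |t - s|) := by
  -- nonnegativity of ρ
  have hnn : ∀ t ∈ Set.Icc a b, ∀ z z' : Z, 0 ≤ ρ t z z' := by
    intro t ht z z'
    have h0 : ρ t z z = 0 := (hρ0 t ht z z).2 rfl
    have htr := hρtri t ht z z' z
    have hsy := hρs t ht z' z
    linarith
  have hbdd : ∀ t ∈ Set.Icc a b, ∀ s ∈ Set.Icc a b, ∀ x y : Z,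
      BddBelow (Set.range fun z => ρ t x z + ρ s z y) := by
    intro t ht s hs x y
    refine ⟨0, ?_⟩
    rintro r ⟨z, rfl⟩
    exact add_nonneg (hnn t ht x z) (hnn s hs z y)
  have hinf_nonneg : ∀ t ∈ Set.Icc a b, ∀ s ∈ Set.Icc a b, ∀ x y : Z,
      0 ≤ ⨅ z : Z, ρ t x z + ρ s z y := fun t ht s hs x y =>
    le_ciInf fun z => add_nonneg (hnn t ht x z) (hnn s hs z y)
  have hinf_self : ∀ t ∈ Set.Icc a b, ∀ x : Z, (⨅ z : Z, ρ t x z + ρ t z x) = 0 := by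
    intro t ht x
    refine le_antisymm ?_ (hinf_nonneg t ht t ht x x)
    have h1 := ciInf_le (hbdd t ht t ht x x) x
    have h0 : ρ t x x = 0 := (hρ0 t ht x x).2 rfl
    linarith
  refine ⟨?_, ?_, ?_, ?_⟩
  · -- d p q = 0 ↔ p = q
    rintro ⟨x, t⟩ ⟨y, s⟩ ht hs
    rw [hd]
    constructor
    · intro h
      have h1 := hinf_nonneg t ht s hs x y
      have h2 : 0 ≤ c * |t - s| := mul_nonneg hc.le (abs_nonneg _)
      have h3 : c * |t - s| = 0 := by
        simp only at h h1; linarith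
      have h4 : |t - s| = 0 := (mul_eq_zero.mp h3).resolve_left (ne_of_gt hc)
      have hts : t = s := by
        have := abs_eq_zero.mp h4; linarith
      subst hts
      have hxy : ρ t x y ≤ ⨅ z : Z, ρ t x z + ρ t z y :=
        le_ciInf fun z => hρtri t ht x z y
      have h5 : ρ t x y = 0 := by
        have := hnn t ht x y
        simp only at h; linarith
      have := (hρ0 t ht x y).1 h5
      simp [this]
    · rintro h
      have h1 := Prod.mk.injEq x t y s ▸ h
      obtain ⟨rfl, rfl⟩ : x = y ∧ t = s := by simpa using h
      simp only [sub_self, abs_zero, mul_zero, add_zero]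
      exact hinf_self t ht x
  · -- symmetry
    rintro ⟨x, t⟩ ⟨y, s⟩ ht hs
    rw [hd, hd]
    simp only
    rw [abs_sub_comm]
    congr 1
    apply le_antisymm
    · refine le_ciInf fun z => ?_
      have := ciInf_le (hbdd t ht s hs x y) z
      rw [hρs s hs y z, hρs t ht z x]
      linarith
    · refine le_ciInf fun z => ?_
      have := ciInf_le (hbdd s hs t ht y x) z
      rw [hρs s hs y z, hρs t ht z x] at this
      linarith
  · -- triangle inequality
    rintro ⟨x, t⟩ ⟨y, s⟩ ⟨w, u⟩ ht hs hu
    rw [hd, hd, hd]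
    simp only
    set I0 := ⨅ z : Z, ρ t x z + ρ u z w with hI0
    -- core estimate for a pair z₁ z₂
    have core : ∀ z₁ z₂ : Z, I0 + c * |t - u| ≤
        ρ t x z₁ + ρ s z₁ z₂ + ρ u z₂ w + c * |t - s| + c * |s - u| := by
      intro z₁ z₂
      have opt1 : ρ t z₁ z₂ + c * |t - u| ≤ ρ s z₁ z₂ + c * |t - s| + c * |s - u| →
          I0 + c * |t - u| ≤ ρ t x z₁ + ρ s z₁ z₂ + ρ u z₂ w + c * |t - s| + c * |s - u| := by
        intro hkey
        have h1 : I0 ≤ ρ t x z₂ + ρ u z₂ w := ciInf_le (hbdd t ht u hu x w) z₂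
        have h2 : ρ t x z₂ ≤ ρ t x z₁ + ρ t z₁ z₂ := hρtri t ht x z₁ z₂
        linarith
      have opt2 : ρ u z₁ z₂ + c * |t - u| ≤ ρ s z₁ z₂ + c * |t - s| + c * |s - u| →
          I0 + c * |t - u| ≤ ρ t x z₁ + ρ s z₁ z₂ + ρ u z₂ w + c * |t - s| + c * |s - u| := by
        intro hkey
        have h1 : I0 ≤ ρ t x z₁ + ρ u z₁ w := ciInf_le (hbdd t ht u hu x w) z₁
        have h2 : ρ u z₁ w ≤ ρ u z₁ z₂ + ρ u z₂ w := hρtri u hu z₁ z₂ w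
        linarith
      have habs : c * |t - u| ≤ c * |t - s| + c * |s - u| := by
        have := mul_le_mul_of_nonneg_left (abs_sub_le t s u) hc.le
        linarith [this, mul_add c |t - s| |s - u|]
      have hl1 := hlip z₁ z₂ t ht s hs
      have hl2 := hlip z₁ z₂ u hu s hs
      rcases le_total t s with h1 | h1 <;> rcases le_total s u with h2 | h2
      · -- t ≤ s ≤ u : s in the middle, use monotonicity
        rcases hmono z₁ z₂ with hm | hm
        · exact opt1 (by have := hm ht hs h1; simp only at this; linarith)
        · exact opt2 (by have := hm hs hu h2; simp only at this; linarith)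
      · -- t ≤ s, u ≤ s
        rcases le_total t u with h3 | h3
        · -- t ≤ u ≤ s : u in the middle, use Lipschitz for opt2
          apply opt2
          have e1 : c * |t - u| = c * u - c * t := by
            rw [abs_of_nonpos (by linarith)]; ring
          have e2 : c * |t - s| = c * s - c * t := by
            rw [abs_of_nonpos (by linarith)]; ring
          have e3 : c * |s - u| = c * s - c * u := by
            rw [abs_of_nonneg (by linarith)]; ring
          have e4 : 2 * c * |u - s| = 2 * (c * s) - 2 * (c * u) := by
            rw [abs_of_nonpos (by linarith)]; ring
          rw [e4] at hl2
          linarith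
        · -- u ≤ t ≤ s : t in the middle, use Lipschitz for opt1
          apply opt1
          have e1 : c * |t - u| = c * t - c * u := by
            rw [abs_of_nonneg (by linarith)]; ring
          have e2 : c * |t - s| = c * s - c * t := by
            rw [abs_of_nonpos (by linarith)]; ring
          have e3 : c * |s - u| = c * s - c * u := by
            rw [abs_of_nonneg (by linarith)]; ring
          have e4 : 2 * c * |t - s| = 2 * (c * s) - 2 * (c * t) := by
            rw [abs_of_nonpos (by linarith)]; ring
          rw [e4] at hl1
          linarith
      · -- s ≤ t, s ≤ u
        rcases le_total t u with h3 | h3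
        · -- s ≤ t ≤ u : t in the middle, use Lipschitz for opt1
          apply opt1
          have e1 : c * |t - u| = c * u - c * t := by
            rw [abs_of_nonpos (by linarith)]; ring
          have e2 : c * |t - s| = c * t - c * s := by
            rw [abs_of_nonneg (by linarith)]; ring
          have e3 : c * |s - u| = c * u - c * s := by
            rw [abs_of_nonpos (by linarith)]; ring
          have e4 : 2 * c * |t - s| = 2 * (c * t) - 2 * (c * s) := by
            rw [abs_of_nonneg (by linarith)]; ring
          rw [e4] at hl1
          linarith
        · -- s ≤ u ≤ t : u in the middle, use Lipschitz for opt2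
          apply opt2
          have e1 : c * |t - u| = c * t - c * u := by
            rw [abs_of_nonneg (by linarith)]; ring
          have e2 : c * |t - s| = c * t - c * s := by
            rw [abs_of_nonneg (by linarith)]; ring
          have e3 : c * |s - u| = c * u - c * s := by
            rw [abs_of_nonpos (by linarith)]; ring
          have e4 : 2 * c * |u - s| = 2 * (c * u) - 2 * (c * s) := by
            rw [abs_of_nonneg (by linarith)]; ring
          rw [e4] at hl2
          linarith
      · -- u ≤ s ≤ t : s in the middle, use monotonicity
        rcases hmono z₁ z₂ with hm | hm
        · exact opt2 (by have := hm hu hs h2; simp only at this; linarith)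
        · exact opt1 (by have := hm hs ht h1; simp only at this; linarith)
    -- combine with triangle at time s and take infima
    have main : ∀ z₁ z₂ : Z, I0 + c * |t - u| ≤
        (ρ t x z₁ + ρ s z₁ y) + ((ρ s y z₂ + ρ u z₂ w) + (c * |t - s| + c * |s - u|)) := by
      intro z₁ z₂
      have htri := hρtri s hs z₁ y z₂
      have := core z₁ z₂
      linarith
    have step1 : ∀ z₁ : Z, I0 + c * |t - u| - (c * |t - s| + c * |s - u|)
        - (ρ t x z₁ + ρ s z₁ y) ≤ ⨅ z : Z, ρ s y z + ρ u z w := by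
      intro z₁
      refine le_ciInf fun z₂ => ?_
      have := main z₁ z₂
      linarith
    have step2 : I0 + c * |t - u| - (c * |t - s| + c * |s - u|)
        - (⨅ z : Z, ρ s y z + ρ u z w) ≤ ⨅ z : Z, ρ t x z + ρ s z y := by
      refine le_ciInf fun z₁ => ?_
      have := step1 z₁
      linarith
    linarith
  · -- Hausdorff distance between sections
    intro t ht s hs
    have hdz : ∀ z z' : Z, c * |t - s| ≤ d (z, t) (z', s) := by
      intro z z'
      rw [hd]
      have := hinf_nonneg t ht s hs z z'
      simp only at this ⊢
      linarith
    have hbd : ∀ z : Z, BddBelow (Set.range fun z' : Z => d (z, t) (z', s)) := by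
      intro z
      exact ⟨c * |t - s|, by rintro r ⟨z', rfl⟩; exact hdz z z'⟩
    have hbd' : ∀ z' : Z, BddBelow (Set.range fun z : Z => d (z, t) (z', s)) := by
      intro z'
      exact ⟨c * |t - s|, by rintro r ⟨z, rfl⟩; exact hdz z z'⟩
    have hself : ∀ z : Z, d (z, t) (z, s) = c * |t - s| := by
      intro z
      rw [hd]
      simp only
      have h1 : (⨅ w : Z, ρ t z w + ρ s w z) = 0 := by
        refine le_antisymm ?_ (hinf_nonneg t ht s hs z z)
        have h2 := ciInf_le (hbdd t ht s hs z z) z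
        have h3 : ρ t z z = 0 := (hρ0 t ht z z).2 rfl
        have h4 : ρ s z z = 0 := (hρ0 s hs z z).2 rfl
        linarith
      rw [h1, zero_add]
    have hinf1 : ∀ z : Z, (⨅ z' : Z, d (z, t) (z', s)) = c * |t - s| := by
      intro z
      refine le_antisymm ?_ (le_ciInf fun z' => hdz z z')
      calc (⨅ z' : Z, d (z, t) (z', s)) ≤ d (z, t) (z, s) := ciInf_le (hbd z) z
        _ = c * |t - s| := hself z
    have hinf2 : ∀ z' : Z, (⨅ z : Z, d (z, t) (z', s)) = c * |t - s| := by
      intro z'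
      refine le_antisymm ?_ (le_ciInf fun z => hdz z z')
      calc (⨅ z : Z, d (z, t) (z', s)) ≤ d (z', t) (z', s) := ciInf_le (hbd' z') z'
        _ = c * |t - s| := hself z'
    simp only [hinf1, hinf2, ciSup_const, max_self]
end

section
/- Let X, Y be metric spaces and R a correspondence between them. Then the identity correspondence on R (diagonal) as a correspondence between R_t and R_s (R with the interpolated metrics at parameters t and s) has distortion at most |t−s|·dis(R). Consequently, d_GH(R_t, R_s) ≤ (1/2)|t−s|·dis(R). -/
noncomputable def interp {X Y : Type*} [MetricSpace X] [MetricSpace Y] {R : Set (X × Y)}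
    (t : ℝ) (p q : R) : ℝ :=
  (1 - t) * dist (p : X × Y).1 (q : X × Y).1 + t * dist (p : X × Y).2 (q : X × Y).2

def disSet {X Y : Type*} [MetricSpace X] [MetricSpace Y] (R : Set (X × Y)) : Set ℝ :=
  {r | ∃ p q : R, r = |dist (p : X × Y).1 (q : X × Y).1 - dist (p : X × Y).2 (q : X × Y).2|}

def isCorr {A B : Type*} (S : Set (A × B)) : Prop :=
  (∀ a : A, ∃ b : B, (a, b) ∈ S) ∧ (∀ b : B, ∃ a : A, (a, b) ∈ S)

noncomputable def disBetween {X Y : Type*} [MetricSpace X] [MetricSpace Y] {R : Set (X × Y)}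
    (t s : ℝ) (S : Set (R × R)) : ℝ :=
  sSup {r | ∃ p ∈ S, ∃ q ∈ S, r = |interp t p.1 q.1 - interp s p.2 q.2|}

theorem stmt8 {X Y : Type*} [MetricSpace X] [MetricSpace Y] (R : Set (X × Y))
    (hRX : ∀ x : X, ∃ y : Y, (x, y) ∈ R) (hRY : ∀ y : Y, ∃ x : X, (x, y) ∈ R)
    (hbdd : BddAbove (disSet R)) :
    ∀ t ∈ Set.Icc (0 : ℝ) 1, ∀ s ∈ Set.Icc (0 : ℝ) 1,
      disBetween t s {pq : R × R | pq.1 = pq.2} ≤ |t - s| * sSup (disSet R) ∧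
      (1 / 2) * sInf {r | ∃ S : Set (R × R), isCorr S ∧ r = disBetween t s S} ≤
        (1 / 2) * (|t - s| * sSup (disSet R)) := by
  intro t ht s hs
  have hsupnn : 0 ≤ sSup (disSet R) := by
    apply Real.sSup_nonneg
    rintro x ⟨p, q, rfl⟩
    exact abs_nonneg _
  have hrhsnn : 0 ≤ |t - s| * sSup (disSet R) :=
    mul_nonneg (abs_nonneg _) hsupnn
  have hmain : disBetween t s {pq : R × R | pq.1 = pq.2} ≤ |t - s| * sSup (disSet R) := by
    apply Real.sSup_le _ hrhsnn
    rintro x ⟨p, hp, q, hq, rfl⟩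
    simp only [Set.mem_setOf_eq] at hp hq
    have : interp t p.1 q.1 - interp s p.2 q.2 =
        (t - s) * (dist (p.1 : X × Y).2 (q.1 : X × Y).2 -
          dist (p.1 : X × Y).1 (q.1 : X × Y).1) := by
      rw [hp, hq] at *
      unfold interp
      ring
    rw [this, abs_mul]
    apply mul_le_mul_of_nonneg_left _ (abs_nonneg _)
    rw [abs_sub_comm]
    exact le_csSup hbdd ⟨p.1, q.1, rfl⟩
  refine ⟨hmain, ?_⟩
  have hbelow : BddBelow {r | ∃ S : Set (R × R), isCorr S ∧ r = disBetween t s S} := by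
    refine ⟨0, ?_⟩
    rintro x ⟨S, hS, rfl⟩
    apply Real.sSup_nonneg
    rintro x ⟨p, hp, q, hq, rfl⟩
    exact abs_nonneg _
  have hmem : disBetween t s {pq : R × R | pq.1 = pq.2} ∈
      {r | ∃ S : Set (R × R), isCorr S ∧ r = disBetween t s S} := by
    exact ⟨{pq : R × R | pq.1 = pq.2},
      ⟨fun a => ⟨a, show (a, a).1 = (a, a).2 from rfl⟩,
       fun b => ⟨b, show (b, b).1 = (b, b).2 from rfl⟩⟩, rfl⟩
  have := csInf_le hbelow hmem
  linarith
end

section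
/- Let X, Y be nonisometric compact metric spaces and R a closed optimal correspondence between them, so dis(R) = 2·d_GH(X,Y) > 0. Set c = (1/2)dis(R) and define on R×[0,1] the metric d((p,t),(q,s)) = inf_{r∈R}(|p r|_t + |r q|_s) + c|t−s|, where |·|_t is the interpolated metric (1−t)d_X + t d_Y on R. Then the Hausdorff distance in (R×[0,1], d) between the sections R×{t} and R×{s} equals d_GH(X,Y)·|t−s| for all t, s ∈ [0,1]. -/
theorem stmt9 {X Y : Type*} [MetricSpace X] [MetricSpace Y] (R : Set (X × Y))
    (hRX : ∀ x : X, ∃ y : Y, (x, y) ∈ R) (hRY : ∀ y : Y, ∃ x : X, (x, y) ∈ R)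
    [CompactSpace X] [CompactSpace Y] [Nonempty X] [Nonempty Y]
    (hclosed : IsClosed R) (hnoniso : IsEmpty (X ≃ᵢ Y))
    (hopt : sSup (disSet R) = 2 * GromovHausdorff.ghDist X Y)
    (d : R × ℝ → R × ℝ → ℝ)
    (hd : ∀ p q : R × ℝ, d p q =
      (⨅ r : R, interp p.2 p.1 r + interp q.2 r q.1) + (1 / 2) * sSup (disSet R) * |p.2 - q.2|) :
    ∀ t ∈ Set.Icc (0 : ℝ) 1, ∀ s ∈ Set.Icc (0 : ℝ) 1,
      max (⨆ p : R, ⨅ q : R, d (p, t) (q, s)) (⨆ q : R, ⨅ p : R, d (p, t) (q, s)) =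
        GromovHausdorff.ghDist X Y * |t - s| := by
  have hne : Nonempty R := by
    obtain ⟨x⟩ := ‹Nonempty X›
    obtain ⟨y, hy⟩ := hRX x
    exact ⟨⟨(x, y), hy⟩⟩
  intro t ht s hs
  set c : ℝ := (1 / 2) * sSup (disSet R) * |t - s| with hc
  have hinterp : ∀ u ∈ Set.Icc (0:ℝ) 1, ∀ p q : R, 0 ≤ interp u p q := by
    intro u hu p q
    have h1 : (0:ℝ) ≤ dist (p : X × Y).1 (q : X × Y).1 := dist_nonneg
    have h2 : (0:ℝ) ≤ dist (p : X × Y).2 (q : X × Y).2 := dist_nonneg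
    have := hu.1; have := hu.2
    unfold interp
    nlinarith
  have hself : ∀ u : ℝ, ∀ p : R, interp u p p = 0 := by
    intro u p; simp [interp]
  -- every value of d is ≥ c
  have hdge : ∀ p q : R, c ≤ d (p, t) (q, s) := by
    intro p q
    rw [hd]
    have h0 : 0 ≤ ⨅ r : R, interp t p r + interp s r q :=
      Real.iInf_nonneg fun r => add_nonneg (hinterp t ht p r) (hinterp s hs r q)
    simp only
    linarith
  -- d (p,t) (p,s) = c
  have hdiag : ∀ p : R, d (p, t) (p, s) = c := by
    intro p
    rw [hd]
    have hbdd : BddBelow (Set.range fun r : R => interp t p r + interp s r p) := by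
      refine ⟨0, ?_⟩
      rintro x ⟨r, rfl⟩
      exact add_nonneg (hinterp t ht p r) (hinterp s hs r p)
    have hle : (⨅ r : R, interp t p r + interp s r p) ≤ 0 := by
      have := ciInf_le hbdd p
      simpa [hself] using this
    have hge : 0 ≤ ⨅ r : R, interp t p r + interp s r p :=
      Real.iInf_nonneg fun r => add_nonneg (hinterp t ht p r) (hinterp s hs r p)
    have : (⨅ r : R, interp t p r + interp s r p) = 0 := le_antisymm hle hge
    simp only [this]
    ring
  have hinf1 : ∀ p : R, (⨅ q : R, d (p, t) (q, s)) = c := by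
    intro p
    refine le_antisymm ?_ (le_ciInf fun q => hdge p q)
    have hbdd : BddBelow (Set.range fun q : R => d (p, t) (q, s)) :=
      ⟨c, by rintro x ⟨q, rfl⟩; exact hdge p q⟩
    calc (⨅ q : R, d (p, t) (q, s)) ≤ d (p, t) (p, s) := ciInf_le hbdd p
      _ = c := hdiag p
  have hinf2 : ∀ q : R, (⨅ p : R, d (p, t) (q, s)) = c := by
    intro q
    refine le_antisymm ?_ (le_ciInf fun p => hdge p q)
    have hbdd : BddBelow (Set.range fun p : R => d (p, t) (q, s)) :=
      ⟨c, by rintro x ⟨p, rfl⟩; exact hdge p q⟩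
    calc (⨅ p : R, d (p, t) (q, s)) ≤ d (q, t) (q, s) := ciInf_le hbdd q
      _ = c := hdiag q
  have h1 : (⨆ p : R, ⨅ q : R, d (p, t) (q, s)) = c := by
    simp only [hinf1]; exact ciSup_const
  have h2 : (⨆ q : R, ⨅ p : R, d (p, t) (q, s)) = c := by
    simp only [hinf2]; exact ciSup_const
  rw [h1, h2, max_self, hc, hopt]
  ring
end

section
/- Let X, Y be nonisometric compact metric spaces and R a closed optimal correspondence between them. With the metric d on R×[0,1] as above (with c = (1/2)dis(R)), the restriction of d to each section R×{t} coincides with the interpolated metric |·|_t, so each section R×{t} endowed with the induced metric is isometric to R_t. In particular, the curve t ↦ R×{t} is a shortest curve (geodesic) in the hyperspace H(R×[0,1]) with the Hausdorff metric, connecting an isometric copy of X to an isometric copy of Y. -/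
section Aux

variable {X Y : Type*} [MetricSpace X] [MetricSpace Y] {R : Set (X × Y)}

lemma interp_nonneg {t : ℝ} (ht : t ∈ Set.Icc (0 : ℝ) 1) (p q : R) : 0 ≤ interp t p q :=
  add_nonneg (mul_nonneg (by linarith [ht.2]) dist_nonneg) (mul_nonneg ht.1 dist_nonneg)

lemma interp_self (t : ℝ) (p : R) : interp t p p = 0 := by simp [interp]

lemma interp_triangle {t : ℝ} (ht : t ∈ Set.Icc (0 : ℝ) 1) (p r q : R) :
    interp t p q ≤ interp t p r + interp t r q := by
  unfold interp
  have h1 : dist (p : X × Y).1 (q : X × Y).1 ≤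
      dist (p : X × Y).1 (r : X × Y).1 + dist (r : X × Y).1 (q : X × Y).1 := dist_triangle _ _ _
  have h2 : dist (p : X × Y).2 (q : X × Y).2 ≤
      dist (p : X × Y).2 (r : X × Y).2 + dist (r : X × Y).2 (q : X × Y).2 := dist_triangle _ _ _
  nlinarith [ht.1, ht.2]

end Aux

theorem stmt10 {X Y : Type*} [MetricSpace X] [MetricSpace Y] (R : Set (X × Y))
    (hRX : ∀ x : X, ∃ y : Y, (x, y) ∈ R) (hRY : ∀ y : Y, ∃ x : X, (x, y) ∈ R)
    [CompactSpace X] [CompactSpace Y] [Nonempty X] [Nonempty Y]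
    (hclosed : IsClosed R) (hnoniso : IsEmpty (X ≃ᵢ Y))
    (hopt : sSup (disSet R) = 2 * GromovHausdorff.ghDist X Y)
    (d : R × ℝ → R × ℝ → ℝ)
    (hd : ∀ p q : R × ℝ, d p q =
      (⨅ r : R, interp p.2 p.1 r + interp q.2 r q.1) + (1 / 2) * sSup (disSet R) * |p.2 - q.2|) :
    (∀ t ∈ Set.Icc (0 : ℝ) 1, ∀ p q : R, d (p, t) (q, t) = interp t p q) ∧
    (∀ p q : R, interp 0 p q = dist (p : X × Y).1 (q : X × Y).1) ∧
    (∀ p q : R, interp 1 p q = dist (p : X × Y).2 (q : X × Y).2) ∧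
    Function.Surjective (fun p : R => (p : X × Y).1) ∧
    Function.Surjective (fun p : R => (p : X × Y).2) ∧
    (∀ t ∈ Set.Icc (0 : ℝ) 1, ∀ s ∈ Set.Icc (0 : ℝ) 1,
      (fun (t s : ℝ) => max (⨆ p : R, ⨅ q : R, d (p, t) (q, s)) (⨆ q : R, ⨅ p : R, d (p, t) (q, s))) t s = |t - s| * (fun (t s : ℝ) => max (⨆ p : R, ⨅ q : R, d (p, t) (q, s)) (⨆ q : R, ⨅ p : R, d (p, t) (q, s))) 0 1) := by
  have hne : Nonempty R := by
    obtain ⟨y, hy⟩ := hRX (Classical.arbitrary X)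
    exact ⟨⟨_, hy⟩⟩
  set c : ℝ := (1 / 2) * sSup (disSet R) with hc
  have hbdd : ∀ (f : R → ℝ), (∀ r, 0 ≤ f r) → BddBelow (Set.range f) := by
    rintro f h
    exact ⟨0, by rintro x ⟨r, rfl⟩; exact h r⟩
  -- infimum over r at equal but also differing points with same endpoint
  have hinf_self : ∀ t ∈ Set.Icc (0 : ℝ) 1, ∀ s ∈ Set.Icc (0 : ℝ) 1, ∀ p : R,
      (⨅ r : R, interp t p r + interp s r p) = 0 := by
    intro t ht s hs p
    apply le_antisymm
    · have := ciInf_le (hbdd _ fun r =>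
        add_nonneg (interp_nonneg ht p r) (interp_nonneg hs r p)) p
      simpa [interp_self] using this
    · exact le_ciInf fun r => add_nonneg (interp_nonneg ht p r) (interp_nonneg hs r p)
  -- the inner infimum over q of d (p,t) (q,s)
  have hinner : ∀ t ∈ Set.Icc (0 : ℝ) 1, ∀ s ∈ Set.Icc (0 : ℝ) 1, ∀ p : R,
      (⨅ q : R, d (p, t) (q, s)) = c * |t - s| := by
    intro t ht s hs p
    have hlb : ∀ q : R, c * |t - s| ≤ d (p, t) (q, s) := by
      intro q
      rw [hd]
      have h0 : (0 : ℝ) ≤ ⨅ r : R, interp t p r + interp s r q :=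
        le_ciInf fun r => add_nonneg (interp_nonneg ht p r) (interp_nonneg hs r q)
      simp only []
      nlinarith [h0]
    apply le_antisymm
    · have hbb : BddBelow (Set.range fun q : R => d (p, t) (q, s)) :=
        ⟨c * |t - s|, by rintro x ⟨q, rfl⟩; exact hlb q⟩
      have := ciInf_le hbb p
      rw [hd] at this
      simp only [hinf_self t ht s hs p] at this
      calc (⨅ q : R, d (p, t) (q, s)) ≤ _ := this
        _ = c * |t - s| := by ring
    · exact le_ciInf hlb
  have hinner' : ∀ t ∈ Set.Icc (0 : ℝ) 1, ∀ s ∈ Set.Icc (0 : ℝ) 1, ∀ q : R,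
      (⨅ p : R, d (p, t) (q, s)) = c * |t - s| := by
    intro t ht s hs q
    have hlb : ∀ p : R, c * |t - s| ≤ d (p, t) (q, s) := by
      intro p
      rw [hd]
      have h0 : (0 : ℝ) ≤ ⨅ r : R, interp t p r + interp s r q :=
        le_ciInf fun r => add_nonneg (interp_nonneg ht p r) (interp_nonneg hs r q)
      simp only []
      nlinarith [h0]
    apply le_antisymm
    · have hbb : BddBelow (Set.range fun p : R => d (p, t) (q, s)) :=
        ⟨c * |t - s|, by rintro x ⟨p, rfl⟩; exact hlb p⟩
      have := ciInf_le hbb q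
      rw [hd] at this
      simp only [hinf_self t ht s hs q] at this
      calc (⨅ p : R, d (p, t) (q, s)) ≤ _ := this
        _ = c * |t - s| := by ring
    · exact le_ciInf hlb
  have hH : ∀ t ∈ Set.Icc (0 : ℝ) 1, ∀ s ∈ Set.Icc (0 : ℝ) 1,
      max (⨆ p : R, ⨅ q : R, d (p, t) (q, s)) (⨆ q : R, ⨅ p : R, d (p, t) (q, s))
        = c * |t - s| := by
    intro t ht s hs
    have h1 : (⨆ p : R, ⨅ q : R, d (p, t) (q, s)) = c * |t - s| := by
      have : (fun p : R => ⨅ q : R, d (p, t) (q, s)) = fun _ => c * |t - s| := by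
        funext p; exact hinner t ht s hs p
      rw [iSup_congr (fun p => hinner t ht s hs p)]
      exact ciSup_const
    have h2 : (⨆ q : R, ⨅ p : R, d (p, t) (q, s)) = c * |t - s| := by
      rw [iSup_congr (fun q => hinner' t ht s hs q)]
      exact ciSup_const
    rw [h1, h2, max_self]
  refine ⟨?_, ?_, ?_, ?_, ?_, ?_⟩
  · intro t ht p q
    rw [hd]
    simp only [sub_self, abs_zero, mul_zero, add_zero]
    apply le_antisymm
    · have := ciInf_le (hbdd (fun r : R => interp t p r + interp t r q)
        fun r => add_nonneg (interp_nonneg ht p r) (interp_nonneg ht r q)) p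
      simpa [interp_self] using this
    · exact le_ciInf fun r => interp_triangle ht p r q
  · intro p q; simp [interp]
  · intro p q; simp [interp]
  · intro x
    obtain ⟨y, hy⟩ := hRX x
    exact ⟨⟨(x, y), hy⟩, rfl⟩
  · intro y
    obtain ⟨x, hx⟩ := hRY y
    exact ⟨⟨(x, y), hx⟩, rfl⟩
  · intro t ht s hs
    simp only []
    rw [hH t ht s hs, hH 0 (by norm_num) 1 (by norm_num)]
    rw [show |(0:ℝ) - 1| = 1 by norm_num]
    ring
end

section
/- Let d be the distance on Z×[a,b] from the main construction satisfying the hypotheses of monotonicity and the 2c-Lipschitz condition. For points (z₁,t₁), (z₂,t₂), (z₃,t₃) with t₃ between t₁ and t₂ (i.e., t₁ ≤ t₃ ≤ t₂ or t₂ ≤ t₃ ≤ t₁), the triangle inequality d((z₁,t₁),(z₂,t₂)) + d((z₂,t₂),(z₃,t₃)) ≥ d((z₁,t₁),(z₃,t₃)) holds. -/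
theorem stmt13 {Z : Type*} [Nonempty Z] (a b c : ℝ) (hab : a ≤ b) (hc : 0 < c)
    (ρ : ℝ → Z → Z → ℝ)
    (hρ0 : ∀ t ∈ Set.Icc a b, ∀ z z' : Z, ρ t z z' = 0 ↔ z = z')
    (hρs : ∀ t ∈ Set.Icc a b, ∀ z z' : Z, ρ t z z' = ρ t z' z)
    (hρtri : ∀ t ∈ Set.Icc a b, ∀ z z' z'' : Z, ρ t z z'' ≤ ρ t z z' + ρ t z' z'')
    (d : Z × ℝ → Z × ℝ → ℝ)
    (hd : ∀ p q : Z × ℝ, d p q = (⨅ z : Z, ρ p.2 p.1 z + ρ q.2 z q.1) + c * |p.2 - q.2|)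
    (hmono : ∀ z z' : Z, MonotoneOn (fun t => ρ t z z') (Set.Icc a b) ∨
      AntitoneOn (fun t => ρ t z z') (Set.Icc a b))
    (hlip : ∀ z z' : Z, ∀ t ∈ Set.Icc a b, ∀ s ∈ Set.Icc a b,
      ρ t z z' ≤ ρ s z z' + 2 * c * |t - s|) :
    ∀ t₁ ∈ Set.Icc a b, ∀ t₂ ∈ Set.Icc a b, ∀ t₃ ∈ Set.Icc a b, ∀ z₁ z₂ z₃ : Z,
      ((t₁ ≤ t₃ ∧ t₃ ≤ t₂) ∨ (t₂ ≤ t₃ ∧ t₃ ≤ t₁)) →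
      d (z₁, t₁) (z₃, t₃) ≤ d (z₁, t₁) (z₂, t₂) + d (z₂, t₂) (z₃, t₃) := by
  intro t₁ ht₁ t₂ ht₂ t₃ ht₃ z₁ z₂ z₃ hb
  -- nonnegativity of ρ
  have hnn : ∀ t ∈ Set.Icc a b, ∀ z z' : Z, 0 ≤ ρ t z z' := by
    intro t ht z z'
    have h1 := hρtri t ht z z' z
    have h0 := (hρ0 t ht z z).mpr rfl
    have hs := hρs t ht z z'
    linarith
  have hbdd : ∀ s ∈ Set.Icc a b, ∀ t ∈ Set.Icc a b, ∀ p q : Z,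
      BddBelow (Set.range fun z => ρ s p z + ρ t z q) := by
    intro s hs t ht p q
    refine ⟨0, ?_⟩
    rintro x ⟨z, rfl⟩
    have := hnn s hs p z
    have := hnn t ht z q
    dsimp
    linarith
  set F : Z → ℝ := fun z => ρ t₁ z₁ z + ρ t₃ z z₃ with hF
  set G : Z → ℝ := fun z => ρ t₁ z₁ z + ρ t₂ z z₂ with hG
  set H : Z → ℝ := fun z => ρ t₂ z₂ z + ρ t₃ z z₃ with hH
  have step : ∀ w u : Z, F w ≤ G w + H u + 2 * c * |t₂ - t₃| := by
    intro w u
    have h1 := hρtri t₃ ht₃ w u z₃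
    have h2 := hlip w u t₃ ht₃ t₂ ht₂
    have h3 := hρtri t₂ ht₂ w z₂ u
    have h4 : |t₃ - t₂| = |t₂ - t₃| := abs_sub_comm _ _
    simp only [hF, hG, hH]
    rw [h4] at h2
    linarith
  have hmain : (⨅ z, F z) ≤ (⨅ z, G z) + ((⨅ z, H z) + 2 * c * |t₂ - t₃|) := by
    have h2 : ∀ w : Z, (⨅ z, F z) ≤ G w + ((⨅ z, H z) + 2 * c * |t₂ - t₃|) := by
      intro w
      have hle : (⨅ z, F z) - G w - 2 * c * |t₂ - t₃| ≤ ⨅ z, H z := by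
        apply le_ciInf
        intro u
        have hF1 : (⨅ z, F z) ≤ F w := ciInf_le (hbdd t₁ ht₁ t₃ ht₃ z₁ z₃) w
        have := step w u
        linarith
      linarith
    have hle : (⨅ z, F z) - ((⨅ z, H z) + 2 * c * |t₂ - t₃|) ≤ ⨅ z, G z := by
      apply le_ciInf
      intro w
      have := h2 w
      linarith
    linarith
  have key : c * |t₁ - t₃| + 2 * c * |t₂ - t₃| = c * |t₁ - t₂| + c * |t₂ - t₃| := by
    rcases hb with ⟨h1, h2⟩ | ⟨h1, h2⟩
    · rw [abs_of_nonpos (show t₁ - t₃ ≤ 0 by linarith),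
        abs_of_nonneg (show (0:ℝ) ≤ t₂ - t₃ by linarith),
        abs_of_nonpos (show t₁ - t₂ ≤ 0 by linarith)]
      ring
    · rw [abs_of_nonneg (show (0:ℝ) ≤ t₁ - t₃ by linarith),
        abs_of_nonpos (show t₂ - t₃ ≤ 0 by linarith),
        abs_of_nonneg (show (0:ℝ) ≤ t₁ - t₂ by linarith)]
      ring
  rw [hd, hd, hd]
  simp only [hF, hG, hH] at hmain
  dsimp only
  linarith
end

section
/- Let d be the distance on Z×[a,b] from the main construction satisfying monotonicity and the 2c-Lipschitz condition. For points (z₁,t₁), (z₂,t₂), (z₃,t₃) with t₂ between t₁ and t₃ (i.e., t₁ ≤ t₂ ≤ t₃ or t₃ ≤ t₂ ≤ t₁), the triangle inequality d((z₁,t₁),(z₂,t₂)) + d((z₂,t₂),(z₃,t₃)) ≥ d((z₁,t₁),(z₃,t₃)) holds, using that ρ_{t₂}(z,z') ≥ min(ρ_{t₁}(z,z'), ρ_{t₃}(z,z')) by monotonicity. -/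
theorem stmt14 {Z : Type*} [Nonempty Z] (a b c : ℝ) (hab : a ≤ b) (hc : 0 < c)
    (ρ : ℝ → Z → Z → ℝ)
    (hρ0 : ∀ t ∈ Set.Icc a b, ∀ z z' : Z, ρ t z z' = 0 ↔ z = z')
    (hρs : ∀ t ∈ Set.Icc a b, ∀ z z' : Z, ρ t z z' = ρ t z' z)
    (hρtri : ∀ t ∈ Set.Icc a b, ∀ z z' z'' : Z, ρ t z z'' ≤ ρ t z z' + ρ t z' z'')
    (d : Z × ℝ → Z × ℝ → ℝ)
    (hd : ∀ p q : Z × ℝ, d p q = (⨅ z : Z, ρ p.2 p.1 z + ρ q.2 z q.1) + c * |p.2 - q.2|)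
    (hmono : ∀ z z' : Z, MonotoneOn (fun t => ρ t z z') (Set.Icc a b) ∨
      AntitoneOn (fun t => ρ t z z') (Set.Icc a b))
    (hlip : ∀ z z' : Z, ∀ t ∈ Set.Icc a b, ∀ s ∈ Set.Icc a b,
      ρ t z z' ≤ ρ s z z' + 2 * c * |t - s|) :
    ∀ t₁ ∈ Set.Icc a b, ∀ t₂ ∈ Set.Icc a b, ∀ t₃ ∈ Set.Icc a b, ∀ z₁ z₂ z₃ : Z,
      ((t₁ ≤ t₂ ∧ t₂ ≤ t₃) ∨ (t₃ ≤ t₂ ∧ t₂ ≤ t₁)) →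
      d (z₁, t₁) (z₃, t₃) ≤ d (z₁, t₁) (z₂, t₂) + d (z₂, t₂) (z₃, t₃) := by
  intro t₁ ht₁ t₂ ht₂ t₃ ht₃ z₁ z₂ z₃ hbtw
  have hnn : ∀ t ∈ Set.Icc a b, ∀ z z' : Z, 0 ≤ ρ t z z' := by
    intro t ht z z'
    have h1 := hρtri t ht z z' z
    have h2 : ρ t z z = 0 := (hρ0 t ht z z).2 rfl
    have h4 := hρs t ht z' z
    linarith
  have key : ∀ u v : Z, ρ t₁ u v ≤ ρ t₂ u v ∨ ρ t₃ u v ≤ ρ t₂ u v := by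
    intro u v
    rcases hmono u v with hm | hm
    · rcases hbtw with ⟨h12, h23⟩ | ⟨h32, h21⟩
      · exact Or.inl (hm ht₁ ht₂ h12)
      · exact Or.inr (hm ht₃ ht₂ h32)
    · rcases hbtw with ⟨h12, h23⟩ | ⟨h32, h21⟩
      · exact Or.inr (hm ht₂ ht₃ h23)
      · exact Or.inl (hm ht₂ ht₁ h21)
  rw [hd, hd, hd]
  simp only
  have habs : c * |t₁ - t₃| ≤ c * |t₁ - t₂| + c * |t₂ - t₃| := by
    rw [← mul_add]
    exact mul_le_mul_of_nonneg_left (abs_sub_le t₁ t₂ t₃) hc.le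
  have hbdd13 : BddBelow (Set.range fun z => ρ t₁ z₁ z + ρ t₃ z z₃) := by
    refine ⟨0, ?_⟩; rintro x ⟨z, rfl⟩
    exact add_nonneg (hnn t₁ ht₁ _ _) (hnn t₃ ht₃ _ _)
  have hmain : (⨅ z : Z, ρ t₁ z₁ z + ρ t₃ z z₃) ≤
      (⨅ z : Z, ρ t₁ z₁ z + ρ t₂ z z₂) + (⨅ z : Z, ρ t₂ z₂ z + ρ t₃ z z₃) := by
    apply le_ciInf_add_ciInf
    intro u v
    rcases key u v with h | h
    · calc (⨅ z : Z, ρ t₁ z₁ z + ρ t₃ z z₃) ≤ ρ t₁ z₁ v + ρ t₃ v z₃ := ciInf_le hbdd13 v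
        _ ≤ (ρ t₁ z₁ u + ρ t₁ u v) + ρ t₃ v z₃ := by linarith [hρtri t₁ ht₁ z₁ u v]
        _ ≤ (ρ t₁ z₁ u + ρ t₂ u v) + ρ t₃ v z₃ := by linarith
        _ ≤ (ρ t₁ z₁ u + ρ t₂ u z₂) + (ρ t₂ z₂ v + ρ t₃ v z₃) := by
            linarith [hρtri t₂ ht₂ u z₂ v]
    · calc (⨅ z : Z, ρ t₁ z₁ z + ρ t₃ z z₃) ≤ ρ t₁ z₁ u + ρ t₃ u z₃ := ciInf_le hbdd13 u
        _ ≤ ρ t₁ z₁ u + (ρ t₃ u v + ρ t₃ v z₃) := by linarith [hρtri t₃ ht₃ u v z₃]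
        _ ≤ ρ t₁ z₁ u + (ρ t₂ u v + ρ t₃ v z₃) := by linarith
        _ ≤ (ρ t₁ z₁ u + ρ t₂ u z₂) + (ρ t₂ z₂ v + ρ t₃ v z₃) := by
            linarith [hρtri t₂ ht₂ u z₂ v]
  linarith
end

section
/- Let X, Y be nonisometric compact metric spaces and R an optimal closed correspondence. In the space (R×[0,1], d) from the construction (with c = d_GH(X,Y)), the sections A_t = R×{t} satisfy: d_H(A_t, A_s) = d_GH(R_t, R_s) for all t, s ∈ [0,1]. That is, the Hausdorff distance between sections realizes the Gromov–Hausdorff distance between the corresponding spaces of the rectilinear geodesic. -/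
open Metric GromovHausdorff Set in
/-- If `T` is a correspondence between compact spaces `X` and `Y` whose distortion is at most
`2 * ε`, then the Gromov-Hausdorff distance between `X` and `Y` is at most `ε`. -/
lemma ghDist_le_of_corr {X Y : Type*} [MetricSpace X] [MetricSpace Y]
    [CompactSpace X] [CompactSpace Y] [Nonempty X] [Nonempty Y]
    (T : Set (X × Y)) (hT : isCorr T) {ε : ℝ}
    (H : ∀ z ∈ T, ∀ w ∈ T, |dist z.1 w.1 - dist z.2 w.2| ≤ 2 * ε) :
    GromovHausdorff.ghDist X Y ≤ ε := by
  obtain ⟨x0⟩ := ‹Nonempty X›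
  obtain ⟨y0, hy0⟩ := hT.1 x0
  haveI : Nonempty T := ⟨⟨(x0, y0), hy0⟩⟩
  refine le_of_forall_pos_le_add fun δ hδ => ?_
  have hεnn : 0 ≤ ε := by
    have := H _ hy0 _ hy0
    have h0 : (0:ℝ) ≤ |dist x0 x0 - dist y0 y0| := abs_nonneg _
    linarith
  have hε'0 : 0 < ε + δ := by linarith
  have H' : ∀ p q : T, |dist (p.1.1) (q.1.1) - dist (p.1.2) (q.1.2)| ≤ 2 * (ε + δ) :=
    fun p q => (H _ p.2 _ q.2).trans (by linarith)
  letI m : MetricSpace (X ⊕ Y) :=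
    glueMetricApprox (fun z : T => z.1.1) (fun z : T => z.1.2) (ε + δ) hε'0 H'
  have Il : Isometry (Sum.inl : X → X ⊕ Y) := Isometry.of_dist_eq fun _ _ => rfl
  have Ir : Isometry (Sum.inr : Y → X ⊕ Y) := Isometry.of_dist_eq fun _ _ => rfl
  have key : ∀ z : T, dist (Sum.inl z.1.1 : X ⊕ Y) (Sum.inr z.1.2) = ε + δ :=
    fun z => glueDist_glued_points (fun z : T => z.1.1) (fun z : T => z.1.2) (ε + δ) z
  have hH : hausdorffDist (Set.range (Sum.inl : X → X ⊕ Y)) (Set.range Sum.inr) ≤ ε + δ := by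
    refine hausdorffDist_le_of_mem_dist hε'0.le ?_ ?_
    · rintro _ ⟨x, rfl⟩
      obtain ⟨y, hy⟩ := hT.1 x
      exact ⟨Sum.inr y, ⟨y, rfl⟩, le_of_eq (key ⟨(x, y), hy⟩)⟩
    · rintro _ ⟨y, rfl⟩
      obtain ⟨x, hx⟩ := hT.2 y
      exact ⟨Sum.inl x, ⟨x, rfl⟩, le_of_eq (by rw [dist_comm]; exact key ⟨(x, y), hx⟩)⟩
  exact (ghDist_le_hausdorffDist Il Ir).trans hH

theorem stmt19 {X Y : Type*} [MetricSpace X] [MetricSpace Y] (R : Set (X × Y))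
    (hRX : ∀ x : X, ∃ y : Y, (x, y) ∈ R) (hRY : ∀ y : Y, ∃ x : X, (x, y) ∈ R)
    [CompactSpace X] [CompactSpace Y] [Nonempty X] [Nonempty Y]
    (hclosed : IsClosed R) (hnoniso : IsEmpty (X ≃ᵢ Y))
    (hopt : sSup (disSet R) = 2 * GromovHausdorff.ghDist X Y)
    (d : R × ℝ → R × ℝ → ℝ)
    (hd : ∀ p q : R × ℝ, d p q =
      (⨅ r : R, interp p.2 p.1 r + interp q.2 r q.1) +
        GromovHausdorff.ghDist X Y * |p.2 - q.2|) :
    ∀ t ∈ Set.Icc (0 : ℝ) 1, ∀ s ∈ Set.Icc (0 : ℝ) 1,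
      max (⨆ p : R, ⨅ q : R, d (p, t) (q, s)) (⨆ q : R, ⨅ p : R, d (p, t) (q, s)) =
        (1 / 2) * sInf {r | ∃ S : Set (R × R), isCorr S ∧ r = disBetween t s S} := by
  intro t ht s hs
  obtain ⟨ht0, ht1⟩ := ht
  obtain ⟨hs0, hs1⟩ := hs
  set c := GromovHausdorff.ghDist X Y with hc_def
  have hc : 0 ≤ c := by
    rw [hc_def]; unfold GromovHausdorff.ghDist; exact dist_nonneg
  obtain ⟨x0⟩ := ‹Nonempty X›
  obtain ⟨y0, hy0⟩ := hRX x0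
  haveI hR : Nonempty R := ⟨⟨(x0, y0), hy0⟩⟩
  -- basic boundedness facts
  have hbX := (isCompact_univ (X := X)).isBounded
  have hbY := (isCompact_univ (X := Y)).isBounded
  set M := Metric.diam (Set.univ : Set X) + Metric.diam (Set.univ : Set Y) with hM_def
  have hdistX : ∀ a b : X, dist a b ≤ Metric.diam (Set.univ : Set X) := fun a b =>
    Metric.dist_le_diam_of_mem hbX trivial trivial
  have hdistY : ∀ a b : Y, dist a b ≤ Metric.diam (Set.univ : Set Y) := fun a b =>
    Metric.dist_le_diam_of_mem hbY trivial trivial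
  have hdXnn := Metric.diam_nonneg (s := (Set.univ : Set X))
  have hdYnn := Metric.diam_nonneg (s := (Set.univ : Set Y))
  have hinterp_nonneg : ∀ u : ℝ, 0 ≤ u → u ≤ 1 → ∀ p q : R, 0 ≤ interp u p q := by
    intro u hu0 hu1 p q
    exact add_nonneg (mul_nonneg (by linarith) dist_nonneg) (mul_nonneg hu0 dist_nonneg)
  have hinterp_le : ∀ u : ℝ, 0 ≤ u → u ≤ 1 → ∀ p q : R, interp u p q ≤ M := by
    intro u hu0 hu1 p q
    unfold interp
    have h1 := hdistX (p : X × Y).1 (q : X × Y).1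
    have h2 := hdistY (p : X × Y).2 (q : X × Y).2
    have h3 : (0:ℝ) ≤ dist (p : X × Y).1 (q : X × Y).1 := dist_nonneg
    have h4 : (0:ℝ) ≤ dist (p : X × Y).2 (q : X × Y).2 := dist_nonneg
    rw [hM_def]
    nlinarith
  have hA_bdd : BddAbove (disSet R) := by
    refine ⟨M, ?_⟩
    rintro r ⟨p, q, rfl⟩
    have h1 := hdistX (p : X × Y).1 (q : X × Y).1
    have h2 := hdistY (p : X × Y).2 (q : X × Y).2
    have h3 : (0:ℝ) ≤ dist (p : X × Y).1 (q : X × Y).1 := dist_nonneg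
    have h4 : (0:ℝ) ≤ dist (p : X × Y).2 (q : X × Y).2 := dist_nonneg
    exact abs_le.mpr ⟨by rw [hM_def]; linarith, by rw [hM_def]; linarith⟩
  have hdis2c : ∀ p q : R,
      |dist (p : X × Y).1 (q : X × Y).1 - dist (p : X × Y).2 (q : X × Y).2| ≤ 2 * c := by
    intro p q
    calc |dist (p : X × Y).1 (q : X × Y).1 - dist (p : X × Y).2 (q : X × Y).2|
        ≤ sSup (disSet R) := le_csSup hA_bdd ⟨p, q, rfl⟩
      _ = 2 * c := hopt
  -- the left-hand side equals c * |t - s|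
  have hdval : ∀ p q : R,
      d (p, t) (q, s) = (⨅ r : R, interp t p r + interp s r q) + c * |t - s| :=
    fun p q => hd (p, t) (q, s)
  have hdlow : ∀ p q : R, c * |t - s| ≤ d (p, t) (q, s) := by
    intro p q
    rw [hdval]
    have h0 : (0:ℝ) ≤ ⨅ r : R, interp t p r + interp s r q :=
      le_ciInf fun r => add_nonneg (hinterp_nonneg t ht0 ht1 p r) (hinterp_nonneg s hs0 hs1 r q)
    linarith
  have hdself : ∀ p : R, d (p, t) (p, s) = c * |t - s| := by
    intro p
    rw [hdval]
    have h0 : (⨅ r : R, interp t p r + interp s r p) = 0 := by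
      refine le_antisymm ?_
        (le_ciInf fun r =>
          add_nonneg (hinterp_nonneg t ht0 ht1 p r) (hinterp_nonneg s hs0 hs1 r p))
      have hb : BddBelow (Set.range fun r : R => interp t p r + interp s r p) := by
        refine ⟨0, ?_⟩
        rintro _ ⟨r, rfl⟩
        exact add_nonneg (hinterp_nonneg t ht0 ht1 p r) (hinterp_nonneg s hs0 hs1 r p)
      have := ciInf_le hb p
      simpa [interp] using this
    rw [h0, zero_add]
  have hinfq : ∀ p : R, (⨅ q : R, d (p, t) (q, s)) = c * |t - s| := by
    intro p
    refine le_antisymm ?_ (le_ciInf fun q => hdlow p q)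
    have hb : BddBelow (Set.range fun q : R => d (p, t) (q, s)) := by
      refine ⟨c * |t - s|, ?_⟩
      rintro _ ⟨q, rfl⟩
      exact hdlow p q
    simpa [hdself p] using ciInf_le hb p
  have hinfp : ∀ q : R, (⨅ p : R, d (p, t) (q, s)) = c * |t - s| := by
    intro q
    refine le_antisymm ?_ (le_ciInf fun p => hdlow p q)
    have hb : BddBelow (Set.range fun p : R => d (p, t) (q, s)) := by
      refine ⟨c * |t - s|, ?_⟩
      rintro _ ⟨p, rfl⟩
      exact hdlow p q
    simpa [hdself q] using ciInf_le hb q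
  have hL : max (⨆ p : R, ⨅ q : R, d (p, t) (q, s)) (⨆ q : R, ⨅ p : R, d (p, t) (q, s))
      = c * |t - s| := by
    simp only [hinfq, hinfp, ciSup_const, max_self]
  -- boundedness of distortion sets
  have hES_bdd : ∀ S : Set (R × R),
      BddAbove {r | ∃ p ∈ S, ∃ q ∈ S, r = |interp t p.1 q.1 - interp s p.2 q.2|} := by
    intro S
    refine ⟨2 * M, ?_⟩
    rintro r ⟨p, hp, q, hq, rfl⟩
    have h1 := hinterp_le t ht0 ht1 p.1 q.1
    have h2 := hinterp_le s hs0 hs1 p.2 q.2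
    have h3 := hinterp_nonneg t ht0 ht1 p.1 q.1
    have h4 := hinterp_nonneg s hs0 hs1 p.2 q.2
    exact abs_le.mpr ⟨by linarith, by linarith⟩
  -- lower bound: every correspondence on R × R has distortion at least 2 c |t - s|
  have hlow : ∀ S : Set (R × R), isCorr S → 2 * c * |t - s| ≤ disBetween t s S := by
    intro S hS
    have hmemD : ∀ p ∈ S, ∀ q ∈ S,
        |interp t p.1 q.1 - interp s p.2 q.2| ≤ disBetween t s S := by
      intro p hp q hq
      unfold disBetween
      exact le_csSup (hES_bdd S) ⟨p, hp, q, hq, rfl⟩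
    have key1 : c ≤ t * c + disBetween t s S / 2 + (1 - s) * c := by
      set T : Set (X × Y) :=
        {z | ∃ p q : R, (p, q) ∈ S ∧ z.1 = (p : X × Y).1 ∧ z.2 = (q : X × Y).2} with hT_def
      have hT : isCorr T := by
        constructor
        · intro x
          obtain ⟨y, hy⟩ := hRX x
          obtain ⟨q, hq⟩ := hS.1 ⟨(x, y), hy⟩
          exact ⟨(q : X × Y).2, ⟨⟨(x, y), hy⟩, q, hq, rfl, rfl⟩⟩
        · intro y
          obtain ⟨x, hx⟩ := hRY y
          obtain ⟨p, hp⟩ := hS.2 ⟨(x, y), hx⟩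
          exact ⟨(p : X × Y).1, ⟨p, ⟨(x, y), hx⟩, hp, rfl, rfl⟩⟩
      have hH : ∀ z ∈ T, ∀ w ∈ T, |dist z.1 w.1 - dist z.2 w.2| ≤
          2 * (t * c + disBetween t s S / 2 + (1 - s) * c) := by
        rintro z ⟨p1, q1, hpq1, hz1, hz2⟩ w ⟨p2, q2, hpq2, hw1, hw2⟩
        rw [hz1, hz2, hw1, hw2]
        have e1 : |dist (p1 : X × Y).1 (p2 : X × Y).1 - interp t p1 p2| ≤ t * (2 * c) := by
          have heq : dist (p1 : X × Y).1 (p2 : X × Y).1 - interp t p1 p2 =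
              t * (dist (p1 : X × Y).1 (p2 : X × Y).1 - dist (p1 : X × Y).2 (p2 : X × Y).2) := by
            unfold interp; ring
          rw [heq, abs_mul, abs_of_nonneg ht0]
          exact mul_le_mul_of_nonneg_left (hdis2c p1 p2) ht0
        have e2 : |interp t p1 p2 - interp s q1 q2| ≤ disBetween t s S :=
          hmemD (p1, q1) hpq1 (p2, q2) hpq2
        have e3 : |interp s q1 q2 - dist (q1 : X × Y).2 (q2 : X × Y).2| ≤ (1 - s) * (2 * c) := by
          have heq : interp s q1 q2 - dist (q1 : X × Y).2 (q2 : X × Y).2 =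
              (1 - s) * (dist (q1 : X × Y).1 (q2 : X × Y).1 -
                dist (q1 : X × Y).2 (q2 : X × Y).2) := by
            unfold interp; ring
          rw [heq, abs_mul, abs_of_nonneg (by linarith : (0:ℝ) ≤ 1 - s)]
          exact mul_le_mul_of_nonneg_left (hdis2c q1 q2) (by linarith)
        have T1 := abs_sub_le (dist (p1 : X × Y).1 (p2 : X × Y).1) (interp t p1 p2)
          (dist (q1 : X × Y).2 (q2 : X × Y).2)
        have T2 := abs_sub_le (interp t p1 p2) (interp s q1 q2)
          (dist (q1 : X × Y).2 (q2 : X × Y).2)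
        linarith
      exact ghDist_le_of_corr T hT hH
    have key2 : c ≤ s * c + disBetween t s S / 2 + (1 - t) * c := by
      set T : Set (X × Y) :=
        {z | ∃ p q : R, (p, q) ∈ S ∧ z.1 = (q : X × Y).1 ∧ z.2 = (p : X × Y).2} with hT_def
      have hT : isCorr T := by
        constructor
        · intro x
          obtain ⟨y, hy⟩ := hRX x
          obtain ⟨p, hp⟩ := hS.2 ⟨(x, y), hy⟩
          exact ⟨(p : X × Y).2, ⟨p, ⟨(x, y), hy⟩, hp, rfl, rfl⟩⟩
        · intro y
          obtain ⟨x, hx⟩ := hRY y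
          obtain ⟨q, hq⟩ := hS.1 ⟨(x, y), hx⟩
          exact ⟨(q : X × Y).1, ⟨⟨(x, y), hx⟩, q, hq, rfl, rfl⟩⟩
      have hH : ∀ z ∈ T, ∀ w ∈ T, |dist z.1 w.1 - dist z.2 w.2| ≤
          2 * (s * c + disBetween t s S / 2 + (1 - t) * c) := by
        rintro z ⟨p1, q1, hpq1, hz1, hz2⟩ w ⟨p2, q2, hpq2, hw1, hw2⟩
        rw [hz1, hz2, hw1, hw2]
        have e1 : |dist (q1 : X × Y).1 (q2 : X × Y).1 - interp s q1 q2| ≤ s * (2 * c) := by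
          have heq : dist (q1 : X × Y).1 (q2 : X × Y).1 - interp s q1 q2 =
              s * (dist (q1 : X × Y).1 (q2 : X × Y).1 - dist (q1 : X × Y).2 (q2 : X × Y).2) := by
            unfold interp; ring
          rw [heq, abs_mul, abs_of_nonneg hs0]
          exact mul_le_mul_of_nonneg_left (hdis2c q1 q2) hs0
        have e2 : |interp s q1 q2 - interp t p1 p2| ≤ disBetween t s S := by
          rw [abs_sub_comm]
          exact hmemD (p1, q1) hpq1 (p2, q2) hpq2
        have e3 : |interp t p1 p2 - dist (p1 : X × Y).2 (p2 : X × Y).2| ≤ (1 - t) * (2 * c) := by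
          have heq : interp t p1 p2 - dist (p1 : X × Y).2 (p2 : X × Y).2 =
              (1 - t) * (dist (p1 : X × Y).1 (p2 : X × Y).1 -
                dist (p1 : X × Y).2 (p2 : X × Y).2) := by
            unfold interp; ring
          rw [heq, abs_mul, abs_of_nonneg (by linarith : (0:ℝ) ≤ 1 - t)]
          exact mul_le_mul_of_nonneg_left (hdis2c p1 p2) (by linarith)
        have T1 := abs_sub_le (dist (q1 : X × Y).1 (q2 : X × Y).1) (interp s q1 q2)
          (dist (p1 : X × Y).2 (p2 : X × Y).2)
        have T2 := abs_sub_le (interp s q1 q2) (interp t p1 p2)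
          (dist (p1 : X × Y).2 (p2 : X × Y).2)
        linarith
      exact ghDist_le_of_corr T hT hH
    rcases abs_cases (t - s) with ⟨habs, _⟩ | ⟨habs, _⟩
    · rw [habs]; linarith
    · rw [habs]; linarith
  -- upper bound with the diagonal correspondence
  have hScorr : isCorr {pq : R × R | pq.1 = pq.2} :=
    ⟨fun a => ⟨a, rfl⟩, fun b => ⟨b, rfl⟩⟩
  have hdiag : disBetween t s {pq : R × R | pq.1 = pq.2} ≤ 2 * c * |t - s| := by
    unfold disBetween
    apply Real.sSup_le
    · rintro r ⟨p, hp, q, hq, rfl⟩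
      have hp' : p.1 = p.2 := hp
      have hq' : q.1 = q.2 := hq
      have heq : interp t p.1 q.1 - interp s p.2 q.2 =
          (s - t) * (dist (p.1 : X × Y).1 (q.1 : X × Y).1 -
            dist (p.1 : X × Y).2 (q.1 : X × Y).2) := by
        rw [← hp', ← hq']
        unfold interp; ring
      rw [heq, abs_mul, abs_sub_comm s t]
      calc |t - s| * |dist (p.1 : X × Y).1 (q.1 : X × Y).1 -
            dist (p.1 : X × Y).2 (q.1 : X × Y).2|
          ≤ |t - s| * (2 * c) := mul_le_mul_of_nonneg_left (hdis2c _ _) (abs_nonneg _)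
        _ = 2 * c * |t - s| := by ring
    · exact mul_nonneg (by linarith) (abs_nonneg _)
  have hInf : sInf {r | ∃ S : Set (R × R), isCorr S ∧ r = disBetween t s S}
      = 2 * c * |t - s| := by
    refine le_antisymm ?_ (le_csInf ⟨_, _, hScorr, rfl⟩ ?_)
    · refine le_trans (csInf_le ⟨2 * c * |t - s|, ?_⟩ ⟨_, hScorr, rfl⟩) hdiag
      rintro r ⟨S, hS, rfl⟩
      exact hlow S hS
    · rintro r ⟨S, hS, rfl⟩
      exact hlow S hS
  rw [hL, hInf]
  ring
end
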